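/- arXiv:2506.19457 — 6 statements merged into one kernel-verified Lean document; each statement's English description precedes it below -/
import Mathlib

section
/- Let n ≥ 1 and x : Fin n → ℤ. Define sequences val_j : Fin n → ℤ and prev_j : Fin n → ℤ (where prev_j i is the index of the predecessor, or -1 denoting nil) by: val_0 i = x i, prev_0 i = i - 1 (so prev_0 0 = -1); and for each iteration, val_{j+1} i = val_j i + (if prev_j i ≥ 0 then val_j (prev_j i) else 0), prev_{j+1} i = (if prev_j i ≥ 0 then prev_j (prev_j i) else -1). Then for all j and all i, val_j i = ∑_{k = max 0 (i - 2^j + 1)}^{i} x k, and prev_j i = i - 2^j if i - 2^j ≥ 0, else -1. -/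
/-!
Both invariants are proved by induction on `j`. The pointer invariant is self-contained: jumping
twice by `2^j` is jumping by `2^(j+1)`, and once the pointer is nil it stays nil. Given it, the
value at `i` after step `j + 1` adds the window of `2^j` entries ending at `i - 2^j` to the window
of `2^j` entries ending at `i`; writing the clipped windows as half-open intervals
`(max (-1) (i - 2^j), i]` makes this the concatenation of two consecutive intervals.
-/

open Finset

theorem Finset.sum_Ioc_add_sum_Ioc {α M : Type*} [LinearOrder α] [LocallyFiniteOrder α]
    [AddCommMonoid M] (f : α → M) {a b c : α} (hab : a ≤ b) (hbc : b ≤ c) :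
    ∑ k ∈ Ioc a b, f k + ∑ k ∈ Ioc b c, f k = ∑ k ∈ Ioc a c, f k := by
  rw [← Ioc_union_Ioc_eq_Ioc hab hbc, sum_union (Ioc_disjoint_Ioc_of_le le_rfl)]

theorem Int.Icc_max_zero_add_one (a b : ℤ) : Icc (max 0 (a + 1)) b = Ioc (max (-1) a) b := by
  ext k
  simp only [mem_Icc, mem_Ioc]
  omega

theorem prev_eq_of_pointer_jumping (n : ℕ) (prev : ℕ → ℤ → ℤ)
    (hprev0 : ∀ i : ℤ, 0 ≤ i → i < n → prev 0 i = i - 1)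
    (hprevS : ∀ (j : ℕ) (i : ℤ), 0 ≤ i → i < n →
      prev (j + 1) i = (if 0 ≤ prev j i then prev j (prev j i) else -1))
    (j : ℕ) (i : ℤ) (hi : 0 ≤ i) (hin : i < n) :
    prev j i = if 0 ≤ i - 2 ^ j then i - 2 ^ j else -1 := by
  induction j generalizing i with
  | zero =>
    rw [hprev0 i hi hin, pow_zero]
    split_ifs <;> omega
  | succ j ih =>
    have hpow : (2 : ℤ) ^ (j + 1) = 2 ^ j + 2 ^ j := by ring
    have hpos : (0 : ℤ) < 2 ^ j := by positivity
    rw [hprevS j i hi hin, ih i hi hin]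
    by_cases hge : 0 ≤ i - 2 ^ j
    · rw [if_pos hge, if_pos hge, ih (i - 2 ^ j) hge (by omega), hpow, sub_sub]
    · rw [if_neg hge, if_neg (by norm_num), if_neg (by omega)]

theorem val_eq_of_pointer_jumping (n : ℕ) (x : ℤ → ℤ) (val prev : ℕ → ℤ → ℤ)
    (hval0 : ∀ i : ℤ, 0 ≤ i → i < n → val 0 i = x i)
    (hvalS : ∀ (j : ℕ) (i : ℤ), 0 ≤ i → i < n →
      val (j + 1) i = val j i + (if 0 ≤ prev j i then val j (prev j i) else 0))
    (hprev : ∀ (j : ℕ) (i : ℤ), 0 ≤ i → i < n →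
      prev j i = if 0 ≤ i - 2 ^ j then i - 2 ^ j else -1)
    (j : ℕ) (i : ℤ) (hi : 0 ≤ i) (hin : i < n) :
    val j i = ∑ k ∈ Icc (max 0 (i - 2 ^ j + 1)) i, x k := by
  induction j generalizing i with
  | zero =>
    have hstart : max 0 (i - 2 ^ 0 + 1) = i := by omega
    rw [hval0 i hi hin, hstart, Icc_self, sum_singleton]
  | succ j ih =>
    have hpow : (2 : ℤ) ^ (j + 1) = 2 ^ j + 2 ^ j := by ring
    have hpos : (0 : ℤ) < 2 ^ j := by positivity
    rw [hvalS j i hi hin, hprev j i hi hin, ih i hi hin]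
    by_cases hge : 0 ≤ i - 2 ^ j
    · rw [if_pos hge, if_pos hge, ih (i - 2 ^ j) hge (by omega)]
      simp only [Int.Icc_max_zero_add_one]
      rw [max_eq_right (by omega : (-1 : ℤ) ≤ i - 2 ^ j), hpow, ← sub_sub, add_comm]
      exact sum_Ioc_add_sum_Ioc x (by omega) (by omega)
    · have hstart : max 0 (i - 2 ^ (j + 1) + 1) = max 0 (i - 2 ^ j + 1) := by omega
      rw [if_neg hge, if_neg (by norm_num), add_zero, hstart]

theorem prefix_sum_iteration_invariant_general
    (n : ℕ) (x : ℤ → ℤ)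
    (val prev : ℕ → ℤ → ℤ)
    (hval0 : ∀ i : ℤ, 0 ≤ i → i < n → val 0 i = x i)
    (hprev0 : ∀ i : ℤ, 0 ≤ i → i < n → prev 0 i = i - 1)
    (hvalS : ∀ (j : ℕ) (i : ℤ), 0 ≤ i → i < n →
      val (j + 1) i = val j i + (if 0 ≤ prev j i then val j (prev j i) else 0))
    (hprevS : ∀ (j : ℕ) (i : ℤ), 0 ≤ i → i < n →
      prev (j + 1) i = (if 0 ≤ prev j i then prev j (prev j i) else -1)) :
    ∀ (j : ℕ) (i : ℤ), 0 ≤ i → i < n →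
      (val j i = ∑ k ∈ Finset.Icc (max 0 (i - 2 ^ j + 1)) i, x k) ∧
      (prev j i = if 0 ≤ i - 2 ^ j then i - 2 ^ j else -1) := by
  have hprev := prev_eq_of_pointer_jumping n prev hprev0 hprevS
  exact fun j i hi hin =>
    ⟨val_eq_of_pointer_jumping n x val prev hval0 hvalS hprev j i hi hin, hprev j i hi hin⟩

/-- Hillis–Steele prefix sum: after iteration `j`, position `i` holds the sum of the
last `2^j` values up to `i`, and its predecessor pointer is `i - 2^j` (or `-1` for nil). -/
theorem prefix_sum_iteration_invariant
    (n : ℕ) (hn : 1 ≤ n) (x : ℤ → ℤ)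
    (val prev : ℕ → ℤ → ℤ)
    (hval0 : ∀ i : ℤ, 0 ≤ i → i < n → val 0 i = x i)
    (hprev0 : ∀ i : ℤ, 0 ≤ i → i < n → prev 0 i = i - 1)
    (hvalS : ∀ (j : ℕ) (i : ℤ), 0 ≤ i → i < n →
      val (j + 1) i = val j i + (if 0 ≤ prev j i then val j (prev j i) else 0))
    (hprevS : ∀ (j : ℕ) (i : ℤ), 0 ≤ i → i < n →
      prev (j + 1) i = (if 0 ≤ prev j i then prev j (prev j i) else -1)) :
    ∀ (j : ℕ) (i : ℤ), 0 ≤ i → i < n →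
      (val j i = ∑ k ∈ Finset.Icc (max 0 (i - 2 ^ j + 1)) i, x k) ∧
      (prev j i = if 0 ≤ i - 2 ^ j then i - 2 ^ j else -1) :=
  prefix_sum_iteration_invariant_general n x val prev hval0 hprev0 hvalS hprevS
end

section
/- With the prefix-sum iteration defined as: val_0 i = x i, prev_0 i = i - 1, val_{j+1} i = val_j i + (if prev_j i ≥ 0 then val_j (prev_j i) else 0), prev_{j+1} i = (if prev_j i ≥ 0 then prev_j (prev_j i) else -1), for all i < n: prev_j i = -1 for all j ≥ ⌈log₂ (i+1)⌉ + 1, and consequently val_j i = ∑_{k=0}^{i} x k for all such j. In particular, after ⌈log₂ n⌉ + 1 iterations every position i holds the full prefix sum ∑_{k=0}^{i} x k and no further iteration changes any value. -/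
/-!
By induction on `j`, after `j` rounds position `i` points to `i - 2 ^ j` (or to nil once that
is negative) and holds the sum of `x` over the window `(i - 2 ^ j, i]` clipped at `0`: the
update adds the value of the adjacent window `(i - 2 ^ (j + 1), i - 2 ^ j]` and jumps the
pointer past it. As soon as `2 ^ j > i` the window covers `[0, i]`, and
`2 ^ j > i` holds exactly when `j ≥ ⌈log₂ (i + 1)⌉`.
-/

open Finset

theorem Int.lt_two_pow_of_clog_le {i : ℤ} (hi : 0 ≤ i) {j : ℕ}
    (hj : Nat.clog 2 (i.toNat + 1) ≤ j) : i < 2 ^ j := by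
  have h := (Nat.clog_le_iff_le_pow one_lt_two).mp hj
  zify [hi] at h
  omega

structure IsPrefixSumRun (n : ℕ) (x : ℤ → ℤ) (val prev : ℕ → ℤ → ℤ) : Prop where
  val_zero : ∀ i : ℤ, 0 ≤ i → i < n → val 0 i = x i
  prev_zero : ∀ i : ℤ, 0 ≤ i → i < n → prev 0 i = i - 1
  val_succ : ∀ (j : ℕ) (i : ℤ), 0 ≤ i → i < n →
    val (j + 1) i = val j i + (if 0 ≤ prev j i then val j (prev j i) else 0)
  prev_succ : ∀ (j : ℕ) (i : ℤ), 0 ≤ i → i < n →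
    prev (j + 1) i = (if 0 ≤ prev j i then prev j (prev j i) else -1)

namespace IsPrefixSumRun

variable {n : ℕ} {x : ℤ → ℤ} {val prev : ℕ → ℤ → ℤ}

theorem prev_eq (h : IsPrefixSumRun n x val prev) (j : ℕ) {i : ℤ} (hi : 0 ≤ i) (hin : i < n) :
    prev j i = if 2 ^ j ≤ i then i - 2 ^ j else -1 := by
  induction j generalizing i with
  | zero =>
    rw [h.prev_zero i hi hin]
    split_ifs <;> omega
  | succ j ih =>
    have h2j : (0 : ℤ) < 2 ^ j := by positivity
    rw [h.prev_succ j i hi hin, ih hi hin, pow_succ]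
    by_cases hj : 2 ^ j ≤ i
    · rw [if_pos hj, if_pos (by omega), ih (by omega) (by omega)]
      split_ifs <;> omega
    · rw [if_neg hj, if_neg (by omega), if_neg (by omega)]

theorem val_eq (h : IsPrefixSumRun n x val prev) (j : ℕ) {i : ℤ} (hi : 0 ≤ i) (hin : i < n) :
    val j i = ∑ k ∈ Ioc (max (-1) (i - 2 ^ j)) i, x k := by
  induction j generalizing i with
  | zero =>
    rw [h.val_zero i hi hin, pow_zero, max_eq_right (by omega),
      Ioc_sub_one_left_eq_Icc_of_not_isMin (not_isMin i), Icc_self, sum_singleton]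
  | succ j ih =>
    have h2j : (0 : ℤ) < 2 ^ j := by positivity
    rw [h.val_succ j i hi hin, h.prev_eq j hi hin, ih hi hin, pow_succ]
    by_cases hj : 2 ^ j ≤ i
    · have hmax : max (-1) (i - 2 ^ j) = i - 2 ^ j := max_eq_right (by omega)
      rw [if_pos hj, if_pos (by omega), ih (by omega) (by omega), hmax, add_comm,
        sum_Ioc_add_sum_Ioc _ (by omega) (by omega), show i - 2 ^ j * 2 = i - 2 ^ j - 2 ^ j by ring]
    · rw [if_neg hj, if_neg (by omega), add_zero, max_eq_left (by omega),
        max_eq_left (by omega)]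

theorem prev_eq_neg_one (h : IsPrefixSumRun n x val prev) {j : ℕ} {i : ℤ} (hi : 0 ≤ i)
    (hin : i < n) (hij : i < 2 ^ j) : prev j i = -1 := by
  rw [h.prev_eq j hi hin, if_neg (not_le.mpr hij)]

theorem val_eq_sum_Icc (h : IsPrefixSumRun n x val prev) {j : ℕ} {i : ℤ} (hi : 0 ≤ i)
    (hin : i < n) (hij : i < 2 ^ j) : val j i = ∑ k ∈ Icc 0 i, x k := by
  rw [h.val_eq j hi hin, max_eq_left (by omega), ← Icc_add_one_left_eq_Ioc, neg_add_cancel]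

end IsPrefixSumRun

theorem prefix_sum_termination_general
    (n : ℕ) (x : ℤ → ℤ)
    (val prev : ℕ → ℤ → ℤ)
    (hval0 : ∀ i : ℤ, 0 ≤ i → i < n → val 0 i = x i)
    (hprev0 : ∀ i : ℤ, 0 ≤ i → i < n → prev 0 i = i - 1)
    (hvalS : ∀ (j : ℕ) (i : ℤ), 0 ≤ i → i < n →
      val (j + 1) i = val j i + (if 0 ≤ prev j i then val j (prev j i) else 0))
    (hprevS : ∀ (j : ℕ) (i : ℤ), 0 ≤ i → i < n →
      prev (j + 1) i = (if 0 ≤ prev j i then prev j (prev j i) else -1)) :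
    (∀ i : ℤ, 0 ≤ i → i < n → ∀ j : ℕ, Nat.clog 2 (i.toNat + 1) + 1 ≤ j →
        prev j i = -1 ∧ val j i = ∑ k ∈ Finset.Icc 0 i, x k) ∧
    (∀ j : ℕ, Nat.clog 2 n + 1 ≤ j → ∀ i : ℤ, 0 ≤ i → i < n →
        val j i = ∑ k ∈ Finset.Icc 0 i, x k ∧
        val j i = val (Nat.clog 2 n + 1) i ∧
        prev j i = prev (Nat.clog 2 n + 1) i) := by
  have h : IsPrefixSumRun n x val prev := ⟨hval0, hprev0, hvalS, hprevS⟩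
  have settled : ∀ i : ℤ, 0 ≤ i → i < n → ∀ j : ℕ, Nat.clog 2 (i.toNat + 1) ≤ j →
      prev j i = -1 ∧ val j i = ∑ k ∈ Icc 0 i, x k := fun i hi hin j hj =>
    have hij := Int.lt_two_pow_of_clog_le hi hj
    ⟨h.prev_eq_neg_one hi hin hij, h.val_eq_sum_Icc hi hin hij⟩
  refine ⟨fun i hi hin j hj => settled i hi hin j (by omega), fun j hj i hi hin => ?_⟩
  have hclog : Nat.clog 2 (i.toNat + 1) ≤ Nat.clog 2 n := Nat.clog_mono_right 2 (by omega)
  obtain ⟨hprev, hval⟩ := settled i hi hin j (by omega)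
  obtain ⟨hprev', hval'⟩ := settled i hi hin (Nat.clog 2 n + 1) (by omega)
  exact ⟨hval, hval.trans hval'.symm, hprev.trans hprev'.symm⟩

/-- Hillis–Steele prefix sum termination: position `i` has a nil predecessor and the full
prefix sum from iteration `⌈log₂ (i+1)⌉ + 1` on; after `⌈log₂ n⌉ + 1` iterations every
position holds the full prefix sum and nothing changes any more. -/
theorem prefix_sum_termination
    (n : ℕ) (hn : 1 ≤ n) (x : ℤ → ℤ)
    (val prev : ℕ → ℤ → ℤ)
    (hval0 : ∀ i : ℤ, 0 ≤ i → i < n → val 0 i = x i)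
    (hprev0 : ∀ i : ℤ, 0 ≤ i → i < n → prev 0 i = i - 1)
    (hvalS : ∀ (j : ℕ) (i : ℤ), 0 ≤ i → i < n →
      val (j + 1) i = val j i + (if 0 ≤ prev j i then val j (prev j i) else 0))
    (hprevS : ∀ (j : ℕ) (i : ℤ), 0 ≤ i → i < n →
      prev (j + 1) i = (if 0 ≤ prev j i then prev j (prev j i) else -1)) :
    (∀ i : ℤ, 0 ≤ i → i < n → ∀ j : ℕ, Nat.clog 2 (i.toNat + 1) + 1 ≤ j →
        prev j i = -1 ∧ val j i = ∑ k ∈ Finset.Icc 0 i, x k) ∧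
    (∀ j : ℕ, Nat.clog 2 n + 1 ≤ j → ∀ i : ℤ, 0 ≤ i → i < n →
        val j i = ∑ k ∈ Finset.Icc 0 i, x k ∧
        val j i = val (Nat.clog 2 n + 1) i ∧
        prev j i = prev (Nat.clog 2 n + 1) i) :=
  prefix_sum_termination_general n x val prev hval0 hprev0 hvalS hprevS
end

section
/- Two-pointer 3SUM correctness: Let a : Fin n → ℤ be a strictly increasing sequence (sorted, distinct values) and let t : ℤ. Define the two-pointer process: start with i = 0 and j = n - 1; while i < j, if a i + a j = t report success; if a i + a j < t increment i; if a i + a j > t decrement j. Then the process reports success if and only if there exist indices i < j with a i + a j = t. Moreover the process terminates in at most n - 1 iterations. -/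
/-!
Each non-terminal step moves one pointer inward, so the gap `j - i` strictly decreases until the
state becomes a fixed point, which happens after at most `n - 1` steps. If `a i + a j = t` with
`i < j`, the window of the pointers keeps containing both `i` and `j`: when the left pointer sits
at `i`, monotonicity gives `a i + a p₂ ≥ a i + a j = t`, so it is not advanced, and symmetrically
for the right pointer at `j`. A fixed window containing `i < j` must therefore report success.
-/

/-- One transition of the two-pointer sweep with target `t` on a sorted array `a`. -/
def tpStep (a : ℕ → ℤ) (t : ℤ) (s : ℕ × ℕ) : ℕ × ℕ :=
  if s.1 < s.2 then
    if a s.1 + a s.2 = t then s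
    else if a s.1 + a s.2 < t then (s.1 + 1, s.2)
    else (s.1, s.2 - 1)
  else s

open Function Set

theorem Function.isFixedPt_iterate_of_le_measure {α : Type*} {f : α → α} (μ : α → ℕ)
    (hμ : ∀ x, f x = x ∨ μ (f x) < μ x) {m : ℕ} {x : α} (hm : μ x ≤ m) :
    IsFixedPt f (f^[m] x) := by
  induction m generalizing x with
  | zero => exact (hμ x).resolve_right (by omega)
  | succ m ih =>
    rcases hμ x with hfix | hlt
    · rw [iterate_fixed hfix]
      exact hfix
    · rw [iterate_succ_apply]
      exact ih (by omega)

section TwoPointer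

variable {a : ℕ → ℤ} {t : ℤ} {s : ℕ × ℕ}

theorem tpStep_of_sum_lt (hs : s.1 < s.2) (hlt : a s.1 + a s.2 < t) :
    tpStep a t s = (s.1 + 1, s.2) := by
  simp [tpStep, hs, hlt, hlt.ne]

theorem tpStep_of_sum_gt (hs : s.1 < s.2) (hgt : t < a s.1 + a s.2) :
    tpStep a t s = (s.1, s.2 - 1) := by
  simp [tpStep, hs, hgt.ne', not_lt.2 hgt.le]

theorem tpStep_eq_self_iff : tpStep a t s = s ↔ (s.1 < s.2 → a s.1 + a s.2 = t) := by
  by_cases hs : s.1 < s.2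
  · rcases lt_trichotomy (a s.1 + a s.2) t with hlt | heq | hgt
    · simp [tpStep_of_sum_lt hs hlt, Prod.ext_iff, hs, hlt.ne]
    · simp [tpStep, hs, heq]
    · simp [tpStep_of_sum_gt hs hgt, Prod.ext_iff, hs, hgt.ne']
      omega
  · simp [tpStep, hs]

theorem tpStep_eq_self_or_sub_lt :
    tpStep a t s = s ∨ (tpStep a t s).2 - (tpStep a t s).1 < s.2 - s.1 := by
  by_cases hs : s.1 < s.2
  · rcases lt_trichotomy (a s.1 + a s.2) t with hlt | heq | hgt
    · rw [tpStep_of_sum_lt hs hlt]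
      omega
    · exact .inl (tpStep_eq_self_iff.2 fun _ ↦ heq)
    · rw [tpStep_of_sum_gt hs hgt]
      omega
  · exact .inl (tpStep_eq_self_iff.2 (absurd · hs))

theorem isFixedPt_tpStep_iterate {m : ℕ} (p : ℕ × ℕ) (hm : p.2 - p.1 ≤ m) :
    IsFixedPt (tpStep a t) ((tpStep a t)^[m] p) :=
  isFixedPt_iterate_of_le_measure (fun s ↦ s.2 - s.1) (fun _ ↦ tpStep_eq_self_or_sub_lt) hm

theorem Icc_tpStep_subset : Icc (tpStep a t s).1 (tpStep a t s).2 ⊆ Icc s.1 s.2 := by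
  by_cases hs : s.1 < s.2
  · rcases lt_trichotomy (a s.1 + a s.2) t with hlt | heq | hgt
    · rw [tpStep_of_sum_lt hs hlt]
      exact Icc_subset_Icc (by omega) le_rfl
    · rw [tpStep_eq_self_iff.2 fun _ ↦ heq]
    · rw [tpStep_of_sum_gt hs hgt]
      exact Icc_subset_Icc le_rfl (by omega)
  · rw [tpStep_eq_self_iff.2 (absurd · hs)]

theorem Icc_tpStep_iterate_subset (k : ℕ) (p : ℕ × ℕ) :
    Icc ((tpStep a t)^[k] p).1 ((tpStep a t)^[k] p).2 ⊆ Icc p.1 p.2 := by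
  induction k with
  | zero => rfl
  | succ k ih =>
    rw [iterate_succ_apply']
    exact Icc_tpStep_subset.trans ih

theorem tpStep_brackets {i j : ℕ} (hmono : MonotoneOn a (Icc s.1 s.2)) (hij : i < j)
    (hsum : a i + a j = t) (hi : s.1 ≤ i) (hj : j ≤ s.2) (hne : a s.1 + a s.2 ≠ t) :
    (tpStep a t s).1 ≤ i ∧ j ≤ (tpStep a t s).2 := by
  have hs : s.1 < s.2 := by omega
  have hjs : a j ≤ a s.2 := hmono ⟨by omega, hj⟩ ⟨hs.le, le_rfl⟩ hj
  have hsi : a s.1 ≤ a i := hmono ⟨le_rfl, hs.le⟩ ⟨hi, by omega⟩ hi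
  rcases hne.lt_or_gt with hlt | hgt
  · have : s.1 ≠ i := by rintro rfl; omega
    rw [tpStep_of_sum_lt hs hlt]
    exact ⟨by omega, hj⟩
  · have : s.2 ≠ j := by rintro rfl; omega
    rw [tpStep_of_sum_gt hs hgt]
    exact ⟨hi, by omega⟩

theorem exists_tpStep_iterate_sum_eq {i j : ℕ} (p : ℕ × ℕ) (hmono : MonotoneOn a (Icc p.1 p.2))
    (hij : i < j) (hsum : a i + a j = t) (hi : p.1 ≤ i) (hj : j ≤ p.2) :
    ∃ k, ((tpStep a t)^[k] p).1 < ((tpStep a t)^[k] p).2 ∧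
      a ((tpStep a t)^[k] p).1 + a ((tpStep a t)^[k] p).2 = t := by
  by_contra! hnone
  have hbrackets : ∀ k, ((tpStep a t)^[k] p).1 ≤ i ∧ j ≤ ((tpStep a t)^[k] p).2 := by
    intro k
    induction k with
    | zero => exact ⟨hi, hj⟩
    | succ k ih =>
      rw [iterate_succ_apply']
      exact tpStep_brackets (hmono.mono (Icc_tpStep_iterate_subset k p)) hij hsum ih.1 ih.2
        (hnone k (by omega))
  obtain ⟨hik, hjk⟩ := hbrackets (p.2 - p.1)
  have hfix := tpStep_eq_self_iff.1 (isFixedPt_tpStep_iterate (a := a) (t := t) p le_rfl)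
  exact hnone _ (by omega) (hfix (by omega))

end TwoPointer

theorem two_pointer_correct_general
    (n : ℕ) (a : ℕ → ℤ)
    (ha : ∀ i j : ℕ, i < j → j < n → a i < a j) (t : ℤ) :
    ((∃ k : ℕ,
        ((tpStep a t)^[k] (0, n - 1)).1 < ((tpStep a t)^[k] (0, n - 1)).2 ∧
        a ((tpStep a t)^[k] (0, n - 1)).1 + a ((tpStep a t)^[k] (0, n - 1)).2 = t) ↔
      ∃ i j : ℕ, i < j ∧ j < n ∧ a i + a j = t) ∧
    (tpStep a t)^[n] (0, n - 1) = (tpStep a t)^[n - 1] (0, n - 1) := by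
  have hmono : MonotoneOn a (Icc 0 (n - 1)) := fun x _ y hy hxy ↦ by
    rcases hxy.eq_or_lt with rfl | hlt
    · rfl
    · exact (ha x y hlt (by have := hy.2; omega)).le
  refine ⟨⟨fun ⟨k, hlt, hsum⟩ ↦ ⟨_, _, hlt, ?_, hsum⟩, fun ⟨i, j, hij, hjn, hsum⟩ ↦
    exists_tpStep_iterate_sum_eq _ hmono hij hsum (Nat.zero_le i) (by omega)⟩, ?_⟩
  · have := ((Icc_tpStep_iterate_subset k (0, n - 1)) ⟨hlt.le, le_rfl⟩).2
    omega
  · rcases n with _ | n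
    · rfl
    · rw [Nat.add_sub_cancel, iterate_succ_apply']
      exact isFixedPt_tpStep_iterate _ (by simp)

/-- Two-pointer 3SUM correctness: the sweep starting from `(0, n-1)` reports success iff
there are indices `i < j < n` with `a i + a j = t`, and it terminates within `n - 1`
iterations. -/
theorem two_pointer_correct
    (n : ℕ) (hn : 1 ≤ n) (a : ℕ → ℤ)
    (ha : ∀ i j : ℕ, i < j → j < n → a i < a j) (t : ℤ) :
    ((∃ k : ℕ,
        ((tpStep a t)^[k] (0, n - 1)).1 < ((tpStep a t)^[k] (0, n - 1)).2 ∧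
        a ((tpStep a t)^[k] (0, n - 1)).1 + a ((tpStep a t)^[k] (0, n - 1)).2 = t) ↔
      ∃ i j : ℕ, i < j ∧ j < n ∧ a i + a j = t) ∧
    (tpStep a t)^[n] (0, n - 1) = (tpStep a t)^[n - 1] (0, n - 1) :=
  two_pointer_correct_general n a ha t
end

section
/- BFS spanning-tree distance correctness: Let G = (V, E) be a finite directed graph, u ∈ V, and suppose every vertex is reachable from u. Define dist_0(u) = 0 and dist_0(v) = ⊥ (undefined, encoded as -1) for v ≠ u. In each round, simultaneously: every vertex t with dist = ⊥ that has some in-edge (s, t) with dist(s) ≠ ⊥ receives dist(t) = dist(s') + 1 where (s', t) is some (arbitrarily chosen) such edge. Then: (1) after round i, a vertex v satisfies dist(v) ≠ ⊥ if and only if the shortest-path distance d(u, v) ≤ i; (2) whenever dist(v) ≠ ⊥, dist(v) = d(u, v); (3) the process stabilizes after exactly ecc(u) rounds, where ecc(u) = max_v d(u, v). -/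
/-!
The whole process is pinned down by the invariant `dist i v = if d v ≤ i then d v else -1`,
proved by induction on `i`. In round `i + 1` a vertex at distance `i + 1` has an in-neighbour at
distance `i`, which is already labelled, so it gets labelled; and any labelled in-neighbour `s`
has `d s ≤ i`, so the triangle inequality `d v ≤ d s + 1` forces the new label to be `d v` and
keeps vertices at distance `> i + 1` unlabelled. Since the distances taken by vertices form an
initial segment of `ℕ`, round `i` changes nothing exactly when no vertex is at distance `i + 1`,
i.e. when `ecc u ≤ i`.
-/

/-- `reachN E u k v`: there is a directed walk of length `k` from `u` to `v`. -/
def reachN {V : Type*} (E : V → V → Prop) (u : V) : ℕ → V → Prop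
  | 0, v => v = u
  | k + 1, v => ∃ w, reachN E u k w ∧ E w v

section ShortestDistance

variable {V : Type*} {E : V → V → Prop} {u : V} {d : V → ℕ}

theorem le_of_reachN (hd : ∀ v, d v = sInf {k : ℕ | reachN E u k v}) {v : V} {k : ℕ}
    (h : reachN E u k v) : d v ≤ k := by
  rw [hd v]
  exact Nat.sInf_le h

variable (hd : ∀ v, d v = sInf {k : ℕ | reachN E u k v}) (hreach : ∀ v, ∃ k, reachN E u k v)
include hd hreach

theorem reachN_shortest (v : V) : reachN E u (d v) v := by
  rw [hd v]
  exact Nat.sInf_mem (hreach v)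

theorem shortest_eq_zero_iff {v : V} : d v = 0 ↔ v = u := by
  constructor
  · intro h
    simpa [h, reachN] using reachN_shortest hd hreach v
  · rintro rfl
    exact Nat.le_zero.mp (le_of_reachN hd (rfl : reachN E v 0 v))

theorem shortest_le_succ_of_adj {w v : V} (h : E w v) : d v ≤ d w + 1 :=
  le_of_reachN hd ⟨w, reachN_shortest hd hreach w, h⟩

theorem exists_adj_of_shortest_eq_succ {v : V} {m : ℕ} (hv : d v = m + 1) :
    ∃ w, E w v ∧ d w = m := by
  obtain ⟨w, hw, hwv⟩ : reachN E u (m + 1) v := hv ▸ reachN_shortest hd hreach v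
  have := le_of_reachN hd hw
  have := shortest_le_succ_of_adj hd hreach hwv
  exact ⟨w, hwv, by omega⟩

theorem exists_shortest_eq_of_le {v : V} {m : ℕ} (hm : m ≤ d v) : ∃ w, d w = m := by
  obtain ⟨n, hn⟩ := Nat.exists_eq_add_of_le hm
  induction n generalizing v with
  | zero => exact ⟨v, hn⟩
  | succ n ih =>
    obtain ⟨w, -, hw⟩ := exists_adj_of_shortest_eq_succ hd hreach (v := v) (m := m + n) hn
    exact ih (by omega) hw

end ShortestDistance

/-- The rounds of the frontier process, with `-1` standing for `⊥`. -/
structure IsBFSRun {V : Type*} (E : V → V → Prop) (u : V) (dist : ℕ → V → ℤ) : Prop where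
  zero_self : dist 0 u = 0
  zero_of_ne : ∀ v, v ≠ u → dist 0 v = -1
  keep : ∀ i v, dist i v ≠ -1 → dist (i + 1) v = dist i v
  update : ∀ i v, dist i v = -1 → (∃ s, E s v ∧ dist i s ≠ -1) →
    ∃ s', E s' v ∧ dist i s' ≠ -1 ∧ dist (i + 1) v = dist i s' + 1
  stay : ∀ i v, dist i v = -1 → (¬ ∃ s, E s v ∧ dist i s ≠ -1) → dist (i + 1) v = -1

namespace IsBFSRun

variable {V : Type*} {E : V → V → Prop} {u : V} {d : V → ℕ} {dist : ℕ → V → ℤ}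
  (hrun : IsBFSRun E u dist)
  (hd : ∀ v, d v = sInf {k : ℕ | reachN E u k v}) (hreach : ∀ v, ∃ k, reachN E u k v)
include hrun hd hreach

theorem eq_ite (i : ℕ) (v : V) : dist i v = if d v ≤ i then (d v : ℤ) else -1 := by
  induction i generalizing v with
  | zero =>
    by_cases hv : v = u
    · simp [hv, hrun.zero_self, (shortest_eq_zero_iff hd hreach).mpr rfl]
    · simp [hrun.zero_of_ne v hv, (shortest_eq_zero_iff hd hreach).not.mpr hv]
  | succ i ih =>
    have labelled_iff : ∀ s, dist i s ≠ -1 ↔ d s ≤ i := fun s => by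
      rw [ih s]; split_ifs <;> omega
    by_cases hvi : d v ≤ i
    · rw [hrun.keep i v ((labelled_iff v).mpr hvi), ih v, if_pos hvi, if_pos (by omega)]
    have hv : dist i v = -1 := by rw [ih v, if_neg hvi]
    by_cases hvi' : d v = i + 1
    · obtain ⟨w, hwv, hw⟩ := exists_adj_of_shortest_eq_succ hd hreach hvi'
      obtain ⟨s, hsv, hs, hvs⟩ :=
        hrun.update i v hv ⟨w, hwv, (labelled_iff w).mpr hw.le⟩
      have hsi := (labelled_iff s).mp hs
      have := shortest_le_succ_of_adj hd hreach hsv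
      rw [hvs, ih s, if_pos hsi, if_pos hvi'.le]
      omega
    · refine (hrun.stay i v hv ?_).trans (if_neg (by omega)).symm
      rintro ⟨s, hsv, hs⟩
      have := (labelled_iff s).mp hs
      have := shortest_le_succ_of_adj hd hreach hsv
      omega

theorem step_eq_iff (i : ℕ) (v : V) : dist (i + 1) v = dist i v ↔ d v ≠ i + 1 := by
  rw [hrun.eq_ite hd hreach, hrun.eq_ite hd hreach]
  split_ifs <;> simp <;> omega

theorem stable_iff (i : ℕ) : (∀ v, dist (i + 1) v = dist i v) ↔ ∀ v, d v ≤ i := by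
  simp only [hrun.step_eq_iff hd hreach]
  refine ⟨fun h v => ?_, fun h v => by have := h v; omega⟩
  by_contra! hv
  obtain ⟨w, hw⟩ := exists_shortest_eq_of_le hd hreach (Nat.succ_le_of_lt hv)
  exact h w hw

end IsBFSRun

/-- BFS spanning-tree distance correctness: with `d` the shortest directed-path distance
from `u` (all vertices reachable), the rounds of the frontier process satisfy:
(1) `dist i v ≠ -1` iff `d v ≤ i`; (2) a defined `dist` equals the true distance;
(3) the process is stable at round `i` iff `i ≥ ecc u`. -/
theorem bfs_distance_correct
    (V : Type*) [Fintype V] (E : V → V → Prop) (u : V)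
    (d : V → ℕ)
    (hd : ∀ v, d v = sInf {k : ℕ | reachN E u k v})
    (hreach : ∀ v, ∃ k, reachN E u k v)
    (dist : ℕ → V → ℤ)
    (h0u : dist 0 u = 0)
    (h0 : ∀ v, v ≠ u → dist 0 v = -1)
    (hkeep : ∀ i v, dist i v ≠ -1 → dist (i + 1) v = dist i v)
    (hupd : ∀ i v, dist i v = -1 → (∃ s, E s v ∧ dist i s ≠ -1) →
      ∃ s', E s' v ∧ dist i s' ≠ -1 ∧ dist (i + 1) v = dist i s' + 1)
    (hstay : ∀ i v, dist i v = -1 → (¬ ∃ s, E s v ∧ dist i s ≠ -1) →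
      dist (i + 1) v = -1) :
    (∀ i v, dist i v ≠ -1 ↔ d v ≤ i) ∧
    (∀ i v, dist i v ≠ -1 → dist i v = (d v : ℤ)) ∧
    (∀ i, (∀ v, dist (i + 1) v = dist i v) ↔ Finset.univ.sup d ≤ i) := by
  have hrun : IsBFSRun E u dist := ⟨h0u, h0, hkeep, hupd, hstay⟩
  have eq_ite := hrun.eq_ite hd hreach
  refine ⟨fun i v => ?_, fun i v => ?_, fun i => ?_⟩
  · rw [eq_ite]; split_ifs <;> omega
  · rw [eq_ite]; split_ifs <;> simp
  · rw [hrun.stable_iff hd hreach, Finset.sup_le_iff]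
    simp
end

section
/- In the fixpoint loop of the simple sorting program, after iteration j of the scan, each element e has compared itself against the first j elements of the list; formally, with comp_0(e) = head and comp_{k+1}(e) = succ(comp_k(e)) (nil-absorbing), and newNext_k(e) = argmin { v m : v m > v e, m among the first k list elements } (nil if none), the invariant holds: newNext_n(e) = argmin { v m : v m > v e } over all n elements (nil iff v e is the maximum). Hence the fixpoint stabilizes after at most n + 1 iterations. -/
/-!
Once `n ≤ k`, the scanned prefix `L 0, …, L (k - 1)` meets every element, so the defining
condition of `newNext k e = some m` no longer depends on `k`: it says that `m` minimizes `v`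
over the elements above `v e`. Two options with the same `some`-fibres are equal, and over a
finite type such a minimizer exists as soon as some element lies above `v e`.
-/

theorem exists_min_above_iff {ι α : Type*} [Finite ι] [LinearOrder α] (f : ι → α) (a : α) :
    (∃ m, a < f m ∧ ∀ m', a < f m' → f m ≤ f m') ↔ ∃ m, a < f m := by
  refine ⟨fun ⟨m, hm, _⟩ => ⟨m, hm⟩, fun ⟨m, hm⟩ => ?_⟩
  obtain ⟨m₀, hm₀, hmin⟩ := Set.exists_min_image {x | a < f x} f (Set.toFinite _) ⟨m, hm⟩
  exact ⟨m₀, hm₀, hmin⟩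

section Scan

variable {ι : Type*} {n k : ℕ} {L : ℕ → ι}

theorem exists_scanned_of_surj (hLsurj : ∀ i, ∃ j, j < n ∧ L j = i) (hk : n ≤ k) (i : ι) :
    ∃ j, j < k ∧ j < n ∧ L j = i := by
  obtain ⟨j, hj, rfl⟩ := hLsurj i
  exact ⟨j, hj.trans_le hk, hj, rfl⟩

theorem forall_scanned_iff_of_surj (hLsurj : ∀ i, ∃ j, j < n ∧ L j = i) (hk : n ≤ k)
    {P : ι → Prop} : (∀ j, j < k → j < n → P (L j)) ↔ ∀ i, P i := by
  refine ⟨fun h i => ?_, fun h j _ _ => h (L j)⟩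
  obtain ⟨j, hjk, hjn, rfl⟩ := exists_scanned_of_surj hLsurj hk i
  exact h j hjk hjn

theorem scanned_min_above_iff_of_surj {α : Type*} [Preorder α] (v : ι → α)
    (hLsurj : ∀ i, ∃ j, j < n ∧ L j = i) (hk : n ≤ k) (e m : ι) :
    ((∃ j, j < k ∧ j < n ∧ L j = m) ∧ v e < v m ∧
        ∀ j, j < k → j < n → v e < v (L j) → v m ≤ v (L j)) ↔
      (v e < v m ∧ ∀ m', v e < v m' → v m ≤ v m') := by
  rw [forall_scanned_iff_of_surj hLsurj hk (P := fun i => v e < v i → v m ≤ v i)]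
  exact and_iff_right (exists_scanned_of_surj hLsurj hk m)

end Scan

theorem sort_scan_invariant_general
    (n : ℕ) (v : Fin n → ℤ)
    (L : ℕ → Fin n)
    (hLsurj : ∀ i : Fin n, ∃ j, j < n ∧ L j = i)
    (newNext : ℕ → Fin n → Option (Fin n))
    (hnn : ∀ k e m, newNext k e = some m ↔
      ((∃ j, j < k ∧ j < n ∧ L j = m) ∧ v e < v m ∧
        ∀ j, j < k → j < n → v e < v (L j) → v m ≤ v (L j))) :
    (∀ e m, newNext n e = some m ↔
      (v e < v m ∧ ∀ m', v e < v m' → v m ≤ v m')) ∧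
    (∀ e, newNext n e = none ↔ ∀ m, v m ≤ v e) ∧
    (∀ k e, n ≤ k → newNext k e = newNext n e) := by
  have hscanned : ∀ k, n ≤ k → ∀ e m, newNext k e = some m ↔
      (v e < v m ∧ ∀ m', v e < v m' → v m ≤ v m') :=
    fun k hk e m => (hnn k e m).trans (scanned_min_above_iff_of_surj v hLsurj hk e m)
  refine ⟨hscanned n le_rfl, fun e => ?_, fun k e hk => ?_⟩
  · rw [Option.eq_none_iff_forall_ne_some]
    simp only [ne_eq, hscanned n le_rfl]
    rw [← not_exists, exists_min_above_iff]
    simp only [not_exists, not_lt]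
  · exact Option.ext fun m => (hscanned k hk e m).trans (hscanned n le_rfl e m).symm

/-- Loop invariant of the `Fix(compareElement)` phase: after scanning the first `k` list
elements, `newNext k e` is the argmin of the values greater than `v e` among them; hence
after `n` scans it is the global argmin (none iff `v e` is maximal) and the fixpoint is
stable from iteration `n` on. -/
theorem sort_scan_invariant
    (n : ℕ) (v : Fin n → ℤ) (hv : Function.Injective v)
    (L : ℕ → Fin n)
    (hLsurj : ∀ i : Fin n, ∃ j, j < n ∧ L j = i)
    (hLinj : ∀ j j', j < n → j' < n → L j = L j' → j = j')
    (newNext : ℕ → Fin n → Option (Fin n))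
    (hnn : ∀ k e m, newNext k e = some m ↔
      ((∃ j, j < k ∧ j < n ∧ L j = m) ∧ v e < v m ∧
        ∀ j, j < k → j < n → v e < v (L j) → v m ≤ v (L j))) :
    (∀ e m, newNext n e = some m ↔
      (v e < v m ∧ ∀ m', v e < v m' → v m ≤ v m')) ∧
    (∀ e, newNext n e = none ↔ ∀ m, v m ≤ v e) ∧
    (∀ k e, n ≤ k → newNext k e = newNext n e) :=
  sort_scan_invariant_general n v L hLsurj newNext hnn
end

section
/- Disjoint ordered intervals from splitting: Start with a single integer interval [m, M] (m ≤ M). Repeatedly, any interval [lo, hi] in the current ordered list may be replaced (in place) by the two intervals [lo, spl], [spl+1, hi] where spl = lo + (hi - lo)/2, provided lo < hi; or shrunk to [lo, spl] or [spl+1, hi]. Then at every stage, the list of intervals I_1, ..., I_k is pairwise disjoint and ordered: max(I_j) < min(I_{j+1}) for all j, and every interval is a nonempty subinterval of [m, M]. -/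
/-!
A step replaces one interval `[lo, hi]` of the list by a nonempty, ordered list of nonempty
subintervals of `[lo, hi]`; since the new pieces sit inside the gap left by the old interval,
this preserves the invariant "ordered nonempty subintervals of `[m, M]`".
-/

/-- One rewriting step on an ordered list of integer intervals: an interval `[lo, hi]`
with `lo < hi` may be split in place into `[lo, spl], [spl+1, hi]` where
`spl = lo + (hi - lo)/2`, or shrunk to either half. -/
inductive SplitStep : List (ℤ × ℤ) → List (ℤ × ℤ) → Prop
  | split (pre post : List (ℤ × ℤ)) (lo hi : ℤ) (h : lo < hi) :
      SplitStep (pre ++ (lo, hi) :: post)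
        (pre ++ (lo, lo + (hi - lo) / 2) :: (lo + (hi - lo) / 2 + 1, hi) :: post)
  | shrinkL (pre post : List (ℤ × ℤ)) (lo hi : ℤ) (h : lo < hi) :
      SplitStep (pre ++ (lo, hi) :: post) (pre ++ (lo, lo + (hi - lo) / 2) :: post)
  | shrinkR (pre post : List (ℤ × ℤ)) (lo hi : ℤ) (h : lo < hi) :
      SplitStep (pre ++ (lo, hi) :: post) (pre ++ (lo + (hi - lo) / 2 + 1, hi) :: post)

theorem List.IsChain.replace {α : Type*} {R : α → α → Prop} {pre post ys : List α} {x : α}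
    (h : (pre ++ x :: post).IsChain R) (hys : ys.IsChain R) (hne : ys ≠ [])
    (hhead : ∀ a, R a x → ∀ b ∈ ys.head?, R a b)
    (hlast : ∀ a ∈ ys.getLast?, ∀ b, R x b → R a b) :
    (pre ++ (ys ++ post)).IsChain R := by
  obtain ⟨hpre, hxpost, hpre_x⟩ := List.isChain_append.1 h
  obtain ⟨hx_post, hpost⟩ := List.isChain_cons.1 hxpost
  refine hpre.append (hys.append hpost ?_) ?_
  · exact fun a ha b hb => hlast a ha b (hx_post b hb)
  · intro a ha b hb
    obtain ⟨y, ys, rfl⟩ := List.exists_cons_of_ne_nil hne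
    exact hhead a (hpre_x a ha x rfl) b hb

def OrderedSubintervals (m M : ℤ) (L : List (ℤ × ℤ)) : Prop :=
  L.IsChain (fun p q => p.2 < q.1) ∧ ∀ p ∈ L, m ≤ p.1 ∧ p.1 ≤ p.2 ∧ p.2 ≤ M

theorem OrderedSubintervals.replace {m M : ℤ} {pre post ys : List (ℤ × ℤ)} {x : ℤ × ℤ}
    (h : OrderedSubintervals m M (pre ++ x :: post)) (hys : OrderedSubintervals x.1 x.2 ys)
    (hne : ys ≠ []) :
    OrderedSubintervals m M (pre ++ (ys ++ post)) := by
  obtain ⟨hchain, hmem⟩ := h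
  obtain ⟨hys_chain, hys_mem⟩ := hys
  have hx := hmem x (by simp)
  refine ⟨hchain.replace hys_chain hne ?_ ?_, ?_⟩
  · intro a hax b hb
    have := hys_mem b (List.mem_of_mem_head? hb)
    omega
  · intro a ha b hxb
    have := hys_mem a (List.mem_of_mem_getLast? ha)
    omega
  · intro p hp
    simp only [List.mem_append, List.mem_cons] at hp hmem
    rcases hp with hp | hp | hp
    · exact hmem p (.inl hp)
    · have := hys_mem p hp
      omega
    · exact hmem p (.inr (.inr hp))

section Halves

variable {lo hi : ℤ} (h : lo < hi)
include h

theorem orderedSubintervals_halves :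
    OrderedSubintervals lo hi [(lo, lo + (hi - lo) / 2), (lo + (hi - lo) / 2 + 1, hi)] := by
  simp only [OrderedSubintervals, List.isChain_pair, List.mem_cons, List.not_mem_nil, or_false]
  refine ⟨by omega, ?_⟩
  rintro p (rfl | rfl) <;> omega

theorem orderedSubintervals_left_half :
    OrderedSubintervals lo hi [(lo, lo + (hi - lo) / 2)] := by
  simp only [OrderedSubintervals, List.isChain_singleton, List.mem_singleton, true_and]
  rintro p rfl
  omega

theorem orderedSubintervals_right_half :
    OrderedSubintervals lo hi [(lo + (hi - lo) / 2 + 1, hi)] := by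
  simp only [OrderedSubintervals, List.isChain_singleton, List.mem_singleton, true_and]
  rintro p rfl
  omega

end Halves

theorem SplitStep.orderedSubintervals {m M : ℤ} {L L' : List (ℤ × ℤ)} (hs : SplitStep L L')
    (hL : OrderedSubintervals m M L) : OrderedSubintervals m M L' := by
  cases hs with
  | split pre post lo hi h =>
    exact hL.replace (orderedSubintervals_halves h) (List.cons_ne_nil _ _)
  | shrinkL pre post lo hi h =>
    exact hL.replace (orderedSubintervals_left_half h) (List.cons_ne_nil _ _)
  | shrinkR pre post lo hi h =>
    exact hL.replace (orderedSubintervals_right_half h) (List.cons_ne_nil _ _)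

/-- Disjoint ordered intervals from splitting: starting from the single interval
`[m, M]` with `m ≤ M`, at every stage of the splitting process the interval list is
pairwise disjoint and ordered (each max below the next min) and every interval is a
nonempty subinterval of `[m, M]`. -/
theorem split_intervals_ordered
    (m M : ℤ) (h : m ≤ M)
    (L : List (ℤ × ℤ))
    (hL : Relation.ReflTransGen SplitStep [(m, M)] L) :
    L.Chain' (fun p q => p.2 < q.1) ∧
    ∀ p ∈ L, m ≤ p.1 ∧ p.1 ≤ p.2 ∧ p.2 ≤ M := by
  induction hL with
  | refl => exact ⟨.singleton _, by simpa using h⟩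
  | tail _ hs ih => exact hs.orderedSubintervals ih
end
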